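/- arXiv:2306.09338 — 7 statements merged into one kernel-verified Lean document; each statement's English description precedes it below -/
import Mathlib

section
/- The softmax function S : ℝ^D → ℝ^D defined by S(x)_i = exp(x_i) / ∑_{j=1}^{D} exp(x_j) is 1-Lipschitz with respect to the Euclidean (ℓ²) norm: ‖S(x₁) − S(x₂)‖₂ ≤ ‖x₁ − x₂‖₂ for all x₁, x₂ ∈ ℝ^D. -/
/-!
Softmax is differentiable with Jacobian `diag s - s sᵀ` at `x`, where `s = softmax x` is a
probability vector. Writing `m = ∑ j, s j * u j`, the image of `u` under the Jacobian has squared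
norm `∑ s_i² (u_i - m)² ≤ ∑ s_i (u_i - m)²`, the variance of `u` under `s`, which is at most
`∑ s_i u_i² ≤ ‖u‖²`. So the Jacobian has operator norm at most `1` everywhere, and the mean value
inequality makes softmax `1`-Lipschitz.
-/

open Finset Real WithLp

variable {ι : Type*} [Fintype ι]

noncomputable def softmax (x : EuclideanSpace ℝ ι) : EuclideanSpace ℝ ι :=
  toLp 2 fun i => exp (x i) / ∑ j, exp (x j)

@[simp]
theorem softmax_apply (x : EuclideanSpace ℝ ι) (i : ι) :
    softmax x i = exp (x i) / ∑ j, exp (x j) := rfl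

theorem softmax_nonneg (x : EuclideanSpace ℝ ι) (i : ι) : 0 ≤ softmax x i := by
  rw [softmax_apply]
  positivity

/-- The sum is `1` unless `ι` is empty, when it is `0`. -/
theorem sum_softmax_le_one (x : EuclideanSpace ℝ ι) : ∑ i, softmax x i ≤ 1 := by
  simp only [softmax_apply, ← sum_div]
  exact div_self_le_one _

/-- The linear map `diag s - s sᵀ`; at `s = softmax x` it is the derivative of `softmax` at `x`. -/
noncomputable def softmaxJacobian (s : EuclideanSpace ℝ ι) :
    EuclideanSpace ℝ ι →L[ℝ] EuclideanSpace ℝ ι :=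
  LinearMap.toContinuousLinearMap
    { toFun u := toLp 2 fun i => s i * (u i - ∑ j, s j * u j)
      map_add' u v := by
        ext i
        simp only [PiLp.add_apply, mul_add, sum_add_distrib]
        ring
      map_smul' c u := by
        ext i
        simp only [PiLp.smul_apply, smul_eq_mul, RingHom.id_apply, mul_left_comm _ c, ← mul_sum]
        ring }

@[simp]
theorem softmaxJacobian_apply (s u : EuclideanSpace ℝ ι) (i : ι) :
    softmaxJacobian s u i = s i * (u i - ∑ j, s j * u j) := rfl

theorem hasFDerivAt_softmax (x : EuclideanSpace ℝ ι) :
    HasFDerivAt softmax (softmaxJacobian (softmax x)) x := by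
  rw [← hasFDerivWithinAt_univ, hasFDerivWithinAt_piLp]
  intro i
  rw [hasFDerivWithinAt_univ]
  have hZ : ∑ j, exp (x j) ≠ 0 := (sum_pos (fun j _ => exp_pos _) ⟨i, mem_univ i⟩).ne'
  have hexp (j : ι) : HasFDerivAt (fun y : EuclideanSpace ℝ ι => exp (y j))
      (exp (x j) • EuclideanSpace.proj j) x :=
    (PiLp.hasFDerivAt_apply 2 x j).exp
  simp only [softmax_apply, div_eq_mul_inv]
  refine ((hexp i).fun_mul ((hasDerivAt_inv hZ).comp_hasFDerivAt x
    (HasFDerivAt.fun_sum fun j _ => hexp j))).congr_fderiv ?_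
  ext u
  simp only [neg_smul, smul_neg, Function.comp_apply, add_apply, neg_apply, smul_apply,
    _root_.sum_apply, PiLp.proj_apply, smul_eq_mul, ContinuousLinearMap.comp_apply, softmaxJacobian_apply,
    softmax_apply, div_mul_eq_mul_div, ← sum_div]
  field_simp
  ring

theorem sum_sq_mul_sub_weightedSum_le {s : ι → ℝ} (hs : ∀ i, 0 ≤ s i) (hs_sum : ∑ i, s i ≤ 1)
    (u : ι → ℝ) : ∑ i, (s i * (u i - ∑ j, s j * u j)) ^ 2 ≤ ∑ i, u i ^ 2 := by
  set m := ∑ j, s j * u j with hm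
  have hs_le_one (i : ι) : s i ≤ 1 := (single_le_sum (fun j _ => hs j) (mem_univ i)).trans hs_sum
  calc ∑ i, (s i * (u i - m)) ^ 2
      ≤ ∑ i, s i * (u i - m) ^ 2 := by
        gcongr with i
        rw [mul_pow]
        gcongr
        exact pow_le_of_le_one (hs i) (hs_le_one i) two_ne_zero
    _ = ∑ i, s i * u i ^ 2 - (2 - ∑ i, s i) * m ^ 2 := by
        have hexpand (i : ι) :
            s i * (u i - m) ^ 2 = s i * u i ^ 2 - 2 * m * (s i * u i) + m ^ 2 * s i := by ring
        simp only [hexpand, sum_add_distrib, sum_sub_distrib, ← mul_sum, ← hm]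
        ring
    _ ≤ ∑ i, s i * u i ^ 2 := sub_le_self _ (mul_nonneg (by linarith) (sq_nonneg m))
    _ ≤ ∑ i, u i ^ 2 := by
        gcongr with i
        exact mul_le_of_le_one_left (sq_nonneg _) (hs_le_one i)

theorem norm_softmaxJacobian_le_one {s : EuclideanSpace ℝ ι} (hs : ∀ i, 0 ≤ s i)
    (hs_sum : ∑ i, s i ≤ 1) : ‖softmaxJacobian s‖ ≤ 1 := by
  refine ContinuousLinearMap.opNorm_le_bound _ zero_le_one fun u => ?_
  rw [one_mul, ← sq_le_sq₀ (norm_nonneg _) (norm_nonneg _), EuclideanSpace.norm_sq_eq,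
    EuclideanSpace.norm_sq_eq]
  simpa only [softmaxJacobian_apply, Real.norm_eq_abs, sq_abs] using
    sum_sq_mul_sub_weightedSum_le hs hs_sum u

theorem lipschitzWith_one_softmax : LipschitzWith 1 (softmax : EuclideanSpace ℝ ι → _) := by
  refine lipschitzWith_of_nnnorm_fderiv_le (fun x => (hasFDerivAt_softmax x).differentiableAt)
    fun x => ?_
  rw [(hasFDerivAt_softmax x).fderiv, ← NNReal.coe_le_coe, coe_nnnorm, NNReal.coe_one]
  exact norm_softmaxJacobian_le_one (softmax_nonneg x) (sum_softmax_le_one x)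

/-- The softmax map `S(x)_i = exp (x_i) / ∑_j exp (x_j)` on `ℝ^D` is `1`-Lipschitz
with respect to the Euclidean (ℓ²) norm. -/
theorem softmax_lipschitz_one (D : ℕ)
    (S : EuclideanSpace ℝ (Fin D) → EuclideanSpace ℝ (Fin D))
    (hS : ∀ x i, S x i = Real.exp (x i) / ∑ j, Real.exp (x j)) :
    ∀ x₁ x₂, ‖S x₁ - S x₂‖ ≤ ‖x₁ - x₂‖ := by
  obtain rfl : S = softmax := funext fun x => by ext i; exact hS x i
  intro x₁ x₂
  simpa using lipschitzWith_one_softmax.norm_sub_le x₁ x₂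
end

section
/- The Swish activation function f : ℝ → ℝ defined by f(x) = x·σ(x), where σ(x) = 1/(1 + exp(−x)) is the logistic sigmoid, is Lipschitz with constant 1.1: |f(x₁) − f(x₂)| ≤ 1.1·|x₁ − x₂| for all x₁, x₂ ∈ ℝ. -/
/-- The logistic sigmoid `σ(x) = 1 / (1 + exp (−x))`. -/
noncomputable def sigmoid (x : ℝ) : ℝ := 1 / (1 + Real.exp (-x))

lemma exp24 : (11:ℝ) ≤ Real.exp 2.4 := by
  have h := Real.sum_le_exp_of_nonneg (x := 2.4) (by norm_num) 9
  refine le_trans ?_ h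
  norm_num [Finset.sum_range_succ, Nat.factorial]

lemma key_ineq (x : ℝ) : x ≤ 0.1 * Real.exp x + 1.1 * Real.exp (-x) + 1.2 := by
  set a := Real.log 11 with ha
  have hea : Real.exp a = 11 := Real.exp_log (by norm_num)
  have hle : a ≤ 2.4 := by
    rw [ha, Real.log_le_iff_le_exp (by norm_num)]
    exact exp24
  have h1 : 11 * (1 + (x - a)) ≤ Real.exp x := by
    have h := Real.add_one_le_exp (x - a)
    have : Real.exp x = 11 * Real.exp (x - a) := by
      rw [← hea, ← Real.exp_add]; ring_nf
    rw [this]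
    nlinarith [Real.exp_pos (x - a)]
  have h2 : (1/11 : ℝ) * (1 + (a - x)) ≤ Real.exp (-x) := by
    have h := Real.add_one_le_exp (a - x)
    have : Real.exp (-x) = (1/11) * Real.exp (a - x) := by
      rw [show a - x = a + -x by ring, Real.exp_add, hea]; ring
    rw [this]
    nlinarith [Real.exp_pos (a - x)]
  nlinarith

lemma deriv_bound (x : ℝ) :
    |sigmoid x + x * (sigmoid x * (1 - sigmoid x))| ≤ 1.1 := by
  set t := Real.exp (-x) with htdef
  have ht : 0 < t := Real.exp_pos _
  have h1t : (0:ℝ) < 1 + t := by linarith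
  have hs : sigmoid x = 1 / (1 + t) := rfl
  set s := 1 / (1 + t) with hsdef
  have hs1 : s * (1 + t) = 1 := by rw [hsdef]; field_simp
  have hspos : 0 < s := by positivity
  have het : Real.exp x * t = 1 := by
    rw [htdef, ← Real.exp_add]; norm_num
  -- upper bound ingredient: x * t ≤ 0.1 + 1.2 t + 1.1 t^2
  have hkey := key_ineq x
  have hupper : x * t ≤ 0.1 + 1.2 * t + 1.1 * t^2 := by
    nlinarith [mul_le_mul_of_nonneg_right hkey ht.le]
  -- lower bound ingredient: -x ≤ t hence x * t ≥ -t^2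
  have hlow : -x ≤ t := by
    have := Real.add_one_le_exp (-x)
    rw [← htdef] at this; linarith
  have hlow' : -(t^2) ≤ x * t := by nlinarith
  rw [hs, abs_le]
  constructor
  · -- -1.1 ≤ s + x * (s * (1 - s))
    have h1ms : 1 - s = t * s := by nlinarith [hs1]
    rw [h1ms]
    nlinarith [mul_nonneg (mul_nonneg hspos.le hspos.le) (by nlinarith : (0:ℝ) ≤ x * t + t^2),
      sq_nonneg (s * (1+t)), hs1, mul_pos hspos hspos]
  · have h1ms : 1 - s = t * s := by nlinarith [hs1]
    rw [h1ms]
    nlinarith [mul_nonneg (mul_nonneg hspos.le hspos.le)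
      (by nlinarith : (0:ℝ) ≤ 0.1 + 1.2 * t + 1.1 * t^2 - x * t), hs1, mul_pos hspos hspos]

lemma swish_hasDerivAt (x : ℝ) :
    HasDerivAt (fun y => y * sigmoid y) (sigmoid x + x * (sigmoid x * (1 - sigmoid x))) x := by
  have hne : 1 + Real.exp (-x) ≠ 0 := by positivity
  have h1 : HasDerivAt (fun y : ℝ => 1 + Real.exp (-y)) (-Real.exp (-x)) x := by
    simpa using ((Real.hasDerivAt_exp (-x)).comp x (hasDerivAt_neg x)).const_add 1
  have h2 : HasDerivAt (fun y : ℝ => (1 + Real.exp (-y))⁻¹)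
      (Real.exp (-x) / (1 + Real.exp (-x))^2) x := by
    simpa [neg_neg, neg_div, Pi.inv_def] using h1.inv hne
  have h3 : HasDerivAt (fun y : ℝ => y * (1 + Real.exp (-y))⁻¹) _ x := (hasDerivAt_id' x).mul h2
  have hfun : (fun y : ℝ => y * sigmoid y) = fun y : ℝ => y * (1 + Real.exp (-y))⁻¹ := by
    funext y; rw [sigmoid, one_div]
  rw [hfun]
  convert h3 using 1
  rw [sigmoid]
  field_simp
  ring

/-- The Swish activation `f(x) = x · σ(x)` is Lipschitz with constant `1.1`. -/
theorem swish_lipschitz :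
    ∀ x₁ x₂ : ℝ, |x₁ * sigmoid x₁ - x₂ * sigmoid x₂| ≤ (1.1 : ℝ) * |x₁ - x₂| := by
  intro x₁ x₂
  have H := Convex.norm_image_sub_le_of_norm_hasDerivWithin_le
    (f := fun y => y * sigmoid y)
    (f' := fun y => sigmoid y + y * (sigmoid y * (1 - sigmoid y)))
    (s := Set.univ) (C := 1.1)
    (fun y _ => (swish_hasDerivAt y).hasDerivWithinAt)
    (fun y _ => by simpa [Real.norm_eq_abs] using deriv_bound y)
    convex_univ (Set.mem_univ x₂) (Set.mem_univ x₁)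
  simpa [Real.norm_eq_abs] using H
end

section
/- Fix D ≥ 1, ε > 0, and vectors γ, β ∈ ℝ^D. Define the smoothed LayerNorm map LN : ℝ^D → ℝ^D by y = (I − (1/D)·𝟙𝟙ᵀ)x, z = y / √(‖y‖₂² + ε), and LN(x) = γ ⊙ z + β, where 𝟙 ∈ ℝ^D is the all-ones vector and ⊙ is coordinatewise multiplication. Then LN is Lipschitz with respect to the Euclidean norm with constant at most (max_i |γ_i|) / √ε. -/
theorem euc_norm_sq' {D : ℕ} (v : EuclideanSpace ℝ (Fin D)) : ‖v‖^2 = ∑ i, (v i)^2 := by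
  rw [EuclideanSpace.norm_eq, Real.sq_sqrt (by positivity)]
  simp [sq_abs]

theorem center_norm_le' {D : ℕ} (hD : 1 ≤ D) (w d : EuclideanSpace ℝ (Fin D))
    (hw : ∀ i, w i = d i - (∑ j, d j)/D) : ‖w‖ ≤ ‖d‖ := by
  set m : ℝ := (∑ j, d j)/D with hm
  have hsum : ∑ j, d j = D * m := by
    rw [hm]; field_simp
  have h2 : ‖w‖^2 ≤ ‖d‖^2 := by
    rw [euc_norm_sq' w, euc_norm_sq' d]
    have : ∀ i : Fin D, (w i)^2 = (d i)^2 - 2*m*(d i) + m^2 := by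
      intro i; rw [hw i, ← hm]; ring
    rw [Finset.sum_congr rfl (fun i _ => this i)]
    rw [Finset.sum_add_distrib, Finset.sum_sub_distrib, Finset.sum_const,
      ← Finset.mul_sum, hsum]
    simp [Finset.card_univ]
    have hDpos : (0:ℝ) ≤ (D:ℝ) := Nat.cast_nonneg D
    nlinarith [sq_nonneg m, hDpos]
  have := Real.sqrt_le_sqrt h2
  rwa [Real.sqrt_sq (norm_nonneg _), Real.sqrt_sq (norm_nonneg _)] at this

theorem smooth_normalize_lipschitz (ε : ℝ) (hε : 0 < ε) {E : Type*} [NormedAddCommGroup E]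
    [InnerProductSpace ℝ E] (u v : E) :
    ‖(Real.sqrt (‖u‖^2+ε))⁻¹ • u - (Real.sqrt (‖v‖^2+ε))⁻¹ • v‖ ≤ ‖u - v‖ / Real.sqrt ε := by
  set a := ‖u‖ with ha
  set b := ‖v‖ with hb
  set c : ℝ := inner ℝ u v with hc
  have ha0 : 0 ≤ a := norm_nonneg u
  have hb0 : 0 ≤ b := norm_nonneg v
  have hs0 : 0 < Real.sqrt (a^2+ε) := Real.sqrt_pos.2 (by positivity)
  have ht0 : 0 < Real.sqrt (b^2+ε) := Real.sqrt_pos.2 (by positivity)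
  set s := Real.sqrt (a^2+ε) with hsdef
  set t := Real.sqrt (b^2+ε) with htdef
  have hs : s^2 = a^2+ε := Real.sq_sqrt (by positivity)
  have ht : t^2 = b^2+ε := Real.sq_sqrt (by positivity)
  have hcab : c ≤ a*b := real_inner_le_norm u v
  have hcab' : -(a*b) ≤ c := by
    have := real_inner_le_norm u (-v); simp at this; nlinarith [this]
  have hst : a*b + ε ≤ s*t := by
    rw [hsdef, htdef, ← Real.sqrt_mul (by positivity)]
    rw [show a*b+ε = Real.sqrt ((a*b+ε)^2) from (Real.sqrt_sq (by positivity)).symm]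
    apply Real.sqrt_le_sqrt
    nlinarith [sq_nonneg (a-b)]
  have hns : ‖s⁻¹ • u - t⁻¹ • v‖^2 = a^2/s^2 - 2*(c/(s*t)) + b^2/t^2 := by
    rw [norm_sub_sq_real, norm_smul, norm_smul, real_inner_smul_left, real_inner_smul_right]
    rw [Real.norm_eq_abs, Real.norm_eq_abs, abs_of_pos (by positivity), abs_of_pos (by positivity)]
    rw [← hc]
    field_simp
    rw [ha, hb]
    ring
  have hnuv : ‖u - v‖^2 = a^2 - 2*c + b^2 := by
    rw [norm_sub_sq_real, ← hc, ← ha, ← hb]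
  have key2 : a^2/s^2 - 2*(c/(s*t)) + b^2/t^2 ≤ (a^2 - 2*c + b^2)/ε := by
    have hP2 : (s*t)^2 = (a^2+ε)*(b^2+ε) := by rw [mul_pow, hs, ht]
    have h1 : 0 ≤ (a*b - c) * ((s*t) * (s*t - ε)) := by
      apply mul_nonneg (by linarith)
      apply mul_nonneg (by positivity)
      nlinarith [mul_nonneg ha0 hb0]
    have h2 : 0 ≤ 2*ε*(a*b)*(s*t - (a*b+ε)) := by
      apply mul_nonneg (by positivity); linarith
    have h3 : 0 ≤ a^2*b^2*(a-b)^2 := by positivity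
    have h4 : 0 ≤ ε*(a^2+b^2)*(a-b)^2 := by positivity
    rw [show a^2/s^2 - 2*(c/(s*t)) + b^2/t^2 = (a^2*t^2 - 2*c*(s*t) + b^2*s^2) / (s*t)^2 from by
      field_simp]
    rw [div_le_div_iff₀ (by positivity) hε]
    have h8 : (a^2+b^2)*(s*t)^2 = (a^2+b^2)*((a^2+ε)*(b^2+ε)) := by rw [hP2]
    have h6' : ε*(a^2*t^2) = ε*(a^2*(b^2+ε)) := by rw [ht]
    have h7' : ε*(b^2*s^2) = ε*(b^2*(a^2+ε)) := by rw [hs]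
    have h5' : (a*b)*(s*t)^2 = (a*b)*((a^2+ε)*(b^2+ε)) := by rw [hP2]
    clear_value s t
    clear hs ht hst hcab hcab' hns hnuv hP2 hsdef htdef ha hb hc
    set_option maxHeartbeats 1000000 in
    linarith [h1, h2, h5', h6', h7', h8, h3, h4]
  have hL : ‖s⁻¹ • u - t⁻¹ • v‖^2 ≤ (‖u-v‖/Real.sqrt ε)^2 := by
    rw [div_pow, Real.sq_sqrt hε.le, hns, hnuv]; exact key2
  have := Real.sqrt_le_sqrt hL
  rwa [Real.sqrt_sq (norm_nonneg _), Real.sqrt_sq (by positivity)] at this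

/-- Smoothed LayerNorm `LN(x) = γ ⊙ (y / √(‖y‖² + ε)) + β` with `y = (I − (1/D)𝟙𝟙ᵀ) x`
(i.e. `y_i = x_i − mean x`) is Lipschitz with respect to the Euclidean norm with constant
at most `(max_i |γ_i|) / √ε`. -/
theorem layerNorm_lipschitz (D : ℕ) (hD : 1 ≤ D) (ε : ℝ) (hε : 0 < ε)
    (γ β : Fin D → ℝ)
    (y LN : EuclideanSpace ℝ (Fin D) → EuclideanSpace ℝ (Fin D))
    (hy : ∀ x i, y x i = x i - (∑ j, x j) / D)
    (hLN : ∀ x i, LN x i = γ i * (y x i / Real.sqrt (‖y x‖ ^ 2 + ε)) + β i) :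
    ∀ x₁ x₂, ‖LN x₁ - LN x₂‖ ≤ ((⨆ i, |γ i|) / Real.sqrt ε) * ‖x₁ - x₂‖ := by
  intro x₁ x₂
  have hpos : 0 < D := hD
  haveI : Nonempty (Fin D) := ⟨⟨0, hpos⟩⟩
  set G := ⨆ i, |γ i| with hG
  have hGle : ∀ i, |γ i| ≤ G := fun i =>
    le_ciSup (Set.Finite.bddAbove (Set.finite_range (fun i => |γ i|))) i
  have hG0 : 0 ≤ G := le_trans (abs_nonneg _) (hGle ⟨0, hpos⟩)
  set u := y x₁ with hu
  set v := y x₂ with hv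
  set s := Real.sqrt (‖u‖^2+ε) with hsdef
  set t := Real.sqrt (‖v‖^2+ε) with htdef
  have hs0 : 0 < s := Real.sqrt_pos.2 (by positivity)
  have ht0 : 0 < t := Real.sqrt_pos.2 (by positivity)
  set w : EuclideanSpace ℝ (Fin D) := s⁻¹ • u - t⁻¹ • v with hwdef
  have hwi : ∀ i, w i = u i / s - v i / t := by
    intro i
    rw [hwdef]
    simp [PiLp.sub_apply, PiLp.smul_apply, smul_eq_mul, div_eq_inv_mul]
  have hstep1 : ‖LN x₁ - LN x₂‖ ≤ G * ‖w‖ := by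
    have hsq : ‖LN x₁ - LN x₂‖^2 ≤ (G*‖w‖)^2 := by
      rw [euc_norm_sq']
      have hterm : ∀ i, ((LN x₁ - LN x₂) i)^2 = (γ i)^2 * (w i)^2 := by
        intro i
        have hi : (LN x₁ - LN x₂) i = γ i * w i := by
          have : (LN x₁ - LN x₂) i = LN x₁ i - LN x₂ i := by simp [PiLp.sub_apply]
          rw [this, hLN x₁ i, hLN x₂ i, hwi i, ← hu, ← hv, ← hsdef, ← htdef]
          ring
        rw [hi, mul_pow]
      rw [Finset.sum_congr rfl fun i _ => hterm i]
      calc ∑ i, (γ i)^2 * (w i)^2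
          ≤ ∑ i, G^2 * (w i)^2 := by
            apply Finset.sum_le_sum
            intro i _
            have h := hGle i
            have hg2 : (γ i)^2 ≤ G^2 := by
              rw [← sq_abs (γ i)]
              exact pow_le_pow_left₀ (abs_nonneg _) h 2
            exact mul_le_mul_of_nonneg_right hg2 (sq_nonneg _)
        _ = G^2 * ∑ i, (w i)^2 := by rw [Finset.mul_sum]
        _ = (G*‖w‖)^2 := by rw [mul_pow, euc_norm_sq' w]
    have := Real.sqrt_le_sqrt hsq
    rwa [Real.sqrt_sq (norm_nonneg _), Real.sqrt_sq (by positivity)] at this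
  have hstep2 : ‖w‖ ≤ ‖u - v‖ / Real.sqrt ε := by
    rw [hwdef, hsdef, htdef]
    exact smooth_normalize_lipschitz ε hε u v
  have hstep3 : ‖u - v‖ ≤ ‖x₁ - x₂‖ := by
    apply center_norm_le' hD (u - v) (x₁ - x₂)
    intro i
    have h1 : (u - v) i = u i - v i := by simp [PiLp.sub_apply]
    have h2 : (x₁ - x₂) i = x₁ i - x₂ i := by simp [PiLp.sub_apply]
    have h3 : ∑ j, (x₁ - x₂) j = (∑ j, x₁ j) - ∑ j, x₂ j := by
      rw [← Finset.sum_sub_distrib]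
      exact Finset.sum_congr rfl fun j _ => by simp [PiLp.sub_apply]
    rw [h1, h2, h3, hu, hv, hy x₁ i, hy x₂ i]
    ring
  calc ‖LN x₁ - LN x₂‖ ≤ G * ‖w‖ := hstep1
    _ ≤ G * (‖u - v‖ / Real.sqrt ε) := mul_le_mul_of_nonneg_left hstep2 hG0
    _ ≤ G * (‖x₁ - x₂‖ / Real.sqrt ε) := by
        apply mul_le_mul_of_nonneg_left _ hG0
        gcongr
    _ = (G / Real.sqrt ε) * ‖x₁ - x₂‖ := by ring
end

section
/- Fix D ≥ 1, ε > 0, and vectors γ, β ∈ ℝ^D. Define the smoothed RMSNorm map RMSN : ℝ^D → ℝ^D by RMSN(x) = γ ⊙ (x / √(‖x‖₂² + ε)) + β, where ⊙ is coordinatewise multiplication. Then RMSN is Lipschitz with respect to the Euclidean norm with constant at most (max_i |γ_i|) / √ε. -/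
open scoped RealInnerProductSpace

lemma rms_key (ε a b c s t : ℝ) (hε : 0 < ε) (ha : 0 ≤ a) (hb : 0 ≤ b)
    (hc : c ≤ a * b) (hs : s ^ 2 = a ^ 2 + ε) (ht : t ^ 2 = b ^ 2 + ε)
    (hs0 : 0 < s) (ht0 : 0 < t) :
    ε * (a ^ 2 / s ^ 2 + b ^ 2 / t ^ 2 - 2 * c / (s * t)) ≤ a ^ 2 + b ^ 2 - 2 * c := by
  have e : (s * t) ^ 2 = (a ^ 2 + ε) * (b ^ 2 + ε) := by rw [mul_pow, hs, ht]
  have hst : a * b + ε ≤ s * t := by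
    nlinarith [mul_pos hs0 ht0, sq_nonneg (a - b), mul_nonneg ha hb]
  have key : ε * (a ^ 2 * t ^ 2 + b ^ 2 * s ^ 2 - 2 * c * (s * t)) ≤
      (a ^ 2 + b ^ 2 - 2 * c) * (s ^ 2 * t ^ 2) := by
    rw [hs, ht]
    nlinarith [e, mul_nonneg (sub_nonneg.2 hc) (mul_nonneg (mul_pos hs0 ht0).le
        (by nlinarith [mul_nonneg ha hb] : (0:ℝ) ≤ s * t - ε)),
      mul_nonneg (sq_nonneg (a * b)) (sq_nonneg (a - b)),
      mul_nonneg hε.le (mul_nonneg (sq_nonneg (a - b)) (add_nonneg (sq_nonneg a) (sq_nonneg b))),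
      mul_nonneg (mul_nonneg (mul_nonneg ha hb) hε.le) (sub_nonneg.2 hst)]
  have hq : a ^ 2 / s ^ 2 + b ^ 2 / t ^ 2 - 2 * c / (s * t)
      = (a ^ 2 * t ^ 2 + b ^ 2 * s ^ 2 - 2 * c * (s * t)) / (s ^ 2 * t ^ 2) := by
    field_simp
  rw [hq, ← mul_div_assoc, div_le_iff₀ (by positivity)]
  nlinarith [key]

/-- Smoothed RMSNorm `RMSN(x) = γ ⊙ (x / √(‖x‖² + ε)) + β` is Lipschitz with respect to
the Euclidean norm with constant at most `(max_i |γ_i|) / √ε`. -/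
theorem rmsNorm_lipschitz (D : ℕ) (hD : 1 ≤ D) (ε : ℝ) (hε : 0 < ε)
    (γ β : Fin D → ℝ)
    (RMSN : EuclideanSpace ℝ (Fin D) → EuclideanSpace ℝ (Fin D))
    (hRMSN : ∀ x i, RMSN x i = γ i * (x i / Real.sqrt (‖x‖ ^ 2 + ε)) + β i) :
    ∀ x₁ x₂, ‖RMSN x₁ - RMSN x₂‖ ≤ ((⨆ i, |γ i|) / Real.sqrt ε) * ‖x₁ - x₂‖ := by
  intro x₁ x₂
  haveI : Nonempty (Fin D) := Fin.pos_iff_nonempty.mp hD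
  set G : ℝ := ⨆ i, |γ i| with hGdef
  have hγ : ∀ i, |γ i| ≤ G := fun i =>
    le_ciSup (Set.Finite.bddAbove (Set.finite_range fun i => |γ i|)) i
  have hGnn : 0 ≤ G := le_trans (abs_nonneg _) (hγ (Classical.arbitrary _))
  set s : ℝ := Real.sqrt (‖x₁‖ ^ 2 + ε) with hsdef
  set t : ℝ := Real.sqrt (‖x₂‖ ^ 2 + ε) with htdef
  have hs0 : 0 < s := Real.sqrt_pos.2 (by positivity)
  have ht0 : 0 < t := Real.sqrt_pos.2 (by positivity)
  have hs2 : s ^ 2 = ‖x₁‖ ^ 2 + ε := Real.sq_sqrt (by positivity)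
  have ht2 : t ^ 2 = ‖x₂‖ ^ 2 + ε := Real.sq_sqrt (by positivity)
  set u : EuclideanSpace ℝ (Fin D) := s⁻¹ • x₁ - t⁻¹ • x₂ with hudef
  have hui : ∀ i, u i = x₁ i / s - x₂ i / t := by
    intro i
    simp [hudef, div_eq_inv_mul]
  have hLi : ∀ i, (RMSN x₁ - RMSN x₂) i = γ i * u i := by
    intro i
    have : (RMSN x₁ - RMSN x₂) i = RMSN x₁ i - RMSN x₂ i := rfl
    rw [this, hRMSN, hRMSN, hui]
    ring
  -- squared norm bound on L
  have hL2 : ‖RMSN x₁ - RMSN x₂‖ ^ 2 ≤ G ^ 2 * ‖u‖ ^ 2 := by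
    rw [PiLp.norm_sq_eq_of_L2, PiLp.norm_sq_eq_of_L2, Finset.mul_sum]
    apply Finset.sum_le_sum
    intro i _
    rw [hLi i]
    have h1 : |γ i * u i| ≤ G * |u i| := by
      rw [abs_mul]
      exact mul_le_mul_of_nonneg_right (hγ i) (abs_nonneg _)
    calc ‖γ i * u i‖ ^ 2 = |γ i * u i| ^ 2 := by rw [Real.norm_eq_abs]
      _ ≤ (G * |u i|) ^ 2 := by
          apply pow_le_pow_left₀ (abs_nonneg _) h1
      _ = G ^ 2 * ‖u i‖ ^ 2 := by rw [mul_pow, Real.norm_eq_abs]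
  -- inner product bound
  have hc : ⟪x₁, x₂⟫ ≤ ‖x₁‖ * ‖x₂‖ := real_inner_le_norm x₁ x₂
  have hu2 : ε * ‖u‖ ^ 2 ≤ ‖x₁ - x₂‖ ^ 2 := by
    have e1 : ‖u‖ ^ 2 = ‖x₁‖ ^ 2 / s ^ 2 + ‖x₂‖ ^ 2 / t ^ 2 - 2 * ⟪x₁, x₂⟫ / (s * t) := by
      rw [hudef, norm_sub_sq_real, real_inner_smul_left, real_inner_smul_right,
        norm_smul, norm_smul, mul_pow, mul_pow]
      rw [norm_inv, norm_inv, Real.norm_eq_abs, Real.norm_eq_abs,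
        abs_of_pos hs0, abs_of_pos ht0]
      field_simp
      ring
    have e2 : ‖x₁ - x₂‖ ^ 2 = ‖x₁‖ ^ 2 + ‖x₂‖ ^ 2 - 2 * ⟪x₁, x₂⟫ := by
      rw [norm_sub_sq_real]; ring
    rw [e1, e2]
    exact rms_key ε ‖x₁‖ ‖x₂‖ ⟪x₁, x₂⟫ s t hε (norm_nonneg _) (norm_nonneg _) hc hs2 ht2 hs0 ht0
  -- combine
  have hfinal : ‖RMSN x₁ - RMSN x₂‖ ^ 2 ≤ ((G / Real.sqrt ε) * ‖x₁ - x₂‖) ^ 2 := by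
    have hε' : (Real.sqrt ε) ^ 2 = ε := Real.sq_sqrt hε.le
    have h3 : G ^ 2 * ‖u‖ ^ 2 ≤ G ^ 2 * (‖x₁ - x₂‖ ^ 2 / ε) := by
      apply mul_le_mul_of_nonneg_left _ (by positivity)
      rw [le_div_iff₀ hε]
      linarith [hu2]
    calc ‖RMSN x₁ - RMSN x₂‖ ^ 2 ≤ G ^ 2 * ‖u‖ ^ 2 := hL2
      _ ≤ G ^ 2 * (‖x₁ - x₂‖ ^ 2 / ε) := h3
      _ = ((G / Real.sqrt ε) * ‖x₁ - x₂‖) ^ 2 := by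
          rw [mul_pow, div_pow, hε']; ring
  have hrhs : 0 ≤ (G / Real.sqrt ε) * ‖x₁ - x₂‖ := by positivity
  calc ‖RMSN x₁ - RMSN x₂‖ = Real.sqrt (‖RMSN x₁ - RMSN x₂‖ ^ 2) :=
        (Real.sqrt_sq (norm_nonneg _)).symm
    _ ≤ Real.sqrt (((G / Real.sqrt ε) * ‖x₁ - x₂‖) ^ 2) := Real.sqrt_le_sqrt hfinal
    _ = (G / Real.sqrt ε) * ‖x₁ - x₂‖ := Real.sqrt_sq hrhs
end

section
/- Fix D ≥ 2 and vectors γ, β ∈ ℝ^D. Define the CenterNorm map CN : ℝ^D → ℝ^D by y = (I − (1/D)·𝟙𝟙ᵀ)x and CN(x) = (D/(D−1))·γ ⊙ y + β, where 𝟙 ∈ ℝ^D is the all-ones vector and ⊙ is coordinatewise multiplication. Then CN is Lipschitz with respect to the Euclidean norm with constant at most (D/(D−1))·max_i |γ_i|. -/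
/-- CenterNorm `CN(x) = (D/(D−1)) · γ ⊙ y + β` with `y = (I − (1/D)𝟙𝟙ᵀ) x`
(i.e. `y_i = x_i − mean x`) is Lipschitz with respect to the Euclidean norm with constant
at most `(D/(D−1)) · max_i |γ_i|`. -/
theorem centerNorm_lipschitz (D : ℕ) (hD : 2 ≤ D) (γ β : Fin D → ℝ)
    (y CN : EuclideanSpace ℝ (Fin D) → EuclideanSpace ℝ (Fin D))
    (hy : ∀ x i, y x i = x i - (∑ j, x j) / D)
    (hCN : ∀ x i, CN x i = ((D : ℝ) / ((D : ℝ) - 1)) * (γ i * y x i) + β i) :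
    ∀ x₁ x₂, ‖CN x₁ - CN x₂‖ ≤ (((D : ℝ) / ((D : ℝ) - 1)) * ⨆ i, |γ i|) * ‖x₁ - x₂‖ := by
  intro x₁ x₂
  have hDpos : (0 : ℝ) < D := by positivity
  have hD1 : (0 : ℝ) < (D : ℝ) - 1 := by
    have : (2 : ℝ) ≤ D := by exact_mod_cast hD
    linarith
  set c : ℝ := (D : ℝ) / ((D : ℝ) - 1) with hc
  have hcnn : 0 ≤ c := by positivity
  set M : ℝ := ⨆ i, |γ i| with hM
  have hne : Nonempty (Fin D) := ⟨⟨0, by omega⟩⟩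
  have hMle : ∀ i, |γ i| ≤ M := fun i => le_ciSup (f := fun i => |γ i|) (Set.Finite.bddAbove (Set.finite_range _)) i
  have hMnn : 0 ≤ M := le_trans (abs_nonneg _) (hMle (Classical.arbitrary _))
  set z : Fin D → ℝ := fun i => x₁ i - x₂ i with hz
  set m : ℝ := (∑ j, z j) / D with hm
  have hsum : ∑ j, z j = D * m := by
    rw [hm]; field_simp
  -- coordinates of the difference
  have hdiff : ∀ i, (CN x₁ - CN x₂) i = c * γ i * (z i - m) := by
    intro i
    have : (CN x₁ - CN x₂) i = CN x₁ i - CN x₂ i := rfl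
    have hmean : (∑ j, x₁ j) / D - (∑ j, x₂ j) / D = m := by
      rw [hm, hz]
      rw [Finset.sum_sub_distrib]
      ring
    have hzi : z i = x₁ i - x₂ i := rfl
    rw [this, hCN, hCN, hy, hy, hzi]
    linear_combination (-(c * γ i)) * hmean
  -- sum of squares bound for centering
  have hcenter : ∑ i, (z i - m) ^ 2 ≤ ∑ i, z i ^ 2 := by
    have e1 : ∀ i : Fin D, (z i - m) ^ 2 = z i ^ 2 - 2 * m * z i + m ^ 2 :=
      fun i => by ring
    calc ∑ i, (z i - m) ^ 2 = ∑ i, (z i ^ 2 - 2 * m * z i + m ^ 2) :=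
          Finset.sum_congr rfl fun i _ => e1 i
      _ = (∑ i, z i ^ 2) - 2 * m * (∑ i, z i) + D * m ^ 2 := by
          rw [Finset.sum_add_distrib, Finset.sum_sub_distrib, ← Finset.mul_sum,
            Finset.sum_const, Finset.card_univ, Fintype.card_fin, nsmul_eq_mul]
      _ ≤ ∑ i, z i ^ 2 := by rw [hsum]; nlinarith [sq_nonneg m]
  -- norms
  have hn1 : ‖CN x₁ - CN x₂‖ = Real.sqrt (∑ i, (c * γ i * (z i - m)) ^ 2) := by
    rw [EuclideanSpace.norm_eq]
    congr 1
    refine Finset.sum_congr rfl fun i _ => ?_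
    rw [hdiff i, Real.norm_eq_abs, sq_abs]
  have hn2 : ‖x₁ - x₂‖ = Real.sqrt (∑ i, z i ^ 2) := by
    rw [EuclideanSpace.norm_eq]
    congr 1
    refine Finset.sum_congr rfl fun i _ => ?_
    have : (x₁ - x₂) i = z i := rfl
    rw [this, Real.norm_eq_abs, sq_abs]
  rw [hn1, hn2]
  have key : ∑ i, (c * γ i * (z i - m)) ^ 2 ≤ (c * M) ^ 2 * ∑ i, z i ^ 2 := by
    calc ∑ i, (c * γ i * (z i - m)) ^ 2
        ≤ ∑ i, (c * M) ^ 2 * (z i - m) ^ 2 := by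
          refine Finset.sum_le_sum fun i _ => ?_
          have h1 : (γ i) ^ 2 ≤ M ^ 2 := by
            have := hMle i
            nlinarith [abs_nonneg (γ i), sq_abs (γ i)]
          have e2 : (c * γ i * (z i - m)) ^ 2 = c ^ 2 * γ i ^ 2 * (z i - m) ^ 2 := by ring
          have e3 : (c * M) ^ 2 * (z i - m) ^ 2 = c ^ 2 * M ^ 2 * (z i - m) ^ 2 := by ring
          rw [e2, e3]
          exact mul_le_mul_of_nonneg_right
            (mul_le_mul_of_nonneg_left h1 (sq_nonneg c)) (sq_nonneg _)
      _ = (c * M) ^ 2 * ∑ i, (z i - m) ^ 2 := by rw [← Finset.mul_sum]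
      _ ≤ (c * M) ^ 2 * ∑ i, z i ^ 2 := by
          exact mul_le_mul_of_nonneg_left hcenter (sq_nonneg _)
  calc Real.sqrt (∑ i, (c * γ i * (z i - m)) ^ 2)
      ≤ Real.sqrt ((c * M) ^ 2 * ∑ i, z i ^ 2) := Real.sqrt_le_sqrt key
    _ = (c * M) * Real.sqrt (∑ i, z i ^ 2) := by
        rw [Real.sqrt_mul (sq_nonneg _), Real.sqrt_sq (by positivity)]
end

section
/- Let O, D ≥ 1, ε > 0, let γ ∈ ℝ^O, and let v₁, …, v_O ∈ ℝ^D. Let W be the O × D matrix whose i-th row is W(i,:) = γ_i · v_i / √(‖v_i‖₂² + ε). Then the operator norm of W (with respect to Euclidean norms), i.e., the largest singular value σ_max(W), satisfies σ_max(W) ≤ √(∑_{i=1}^{O} γ_i²). Consequently the WeightNorm layer x ↦ W·x is Lipschitz with constant at most √(∑_{i=1}^{O} γ_i²) with respect to the Euclidean norm. -/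
theorem key (O D : ℕ) (ε : ℝ) (hε : 0 < ε)
    (γ : Fin O → ℝ) (v : Fin O → EuclideanSpace ℝ (Fin D))
    (W : Matrix (Fin O) (Fin D) ℝ)
    (hW : ∀ i j, W i j = γ i * v i j / Real.sqrt (‖v i‖ ^ 2 + ε))
    (x : EuclideanSpace ℝ (Fin D)) :
    ‖Matrix.toEuclideanLin W x‖ ≤ Real.sqrt (∑ i, γ i ^ 2) * ‖x‖ := by
  set y := Matrix.toEuclideanLin W x with hy
  have hyi : ∀ i, y i = γ i / Real.sqrt (‖v i‖ ^ 2 + ε) * ∑ j, v i j * x j := by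
    intro i
    have : y i = ∑ j, W i j * x j := by
      rw [hy, Matrix.toEuclideanLin_apply]
      rfl
    rw [this, Finset.mul_sum]
    congr 1; ext j; rw [hW]; ring
  have hCS : ∀ i, |∑ j, v i j * x j| ≤ ‖v i‖ * ‖x‖ := by
    intro i
    have h2 : (inner ℝ (v i) x : ℝ) = ∑ j, v i j * x j := by
      simp [PiLp.inner_apply, RCLike.inner_apply, mul_comm]
    rw [← h2]
    exact abs_real_inner_le_norm (v i) x
  have hbound : ∀ i, |y i| ≤ |γ i| * ‖x‖ := by
    intro i
    rw [hyi, abs_mul, abs_div]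
    have hsq : (0:ℝ) < ‖v i‖ ^ 2 + ε := by positivity
    have hs : Real.sqrt (‖v i‖ ^ 2 + ε) > 0 := Real.sqrt_pos.2 hsq
    rw [abs_of_nonneg hs.le, div_mul_eq_mul_div, div_le_iff₀ hs]
    calc |γ i| * |∑ j, v i j * x j| ≤ |γ i| * (‖v i‖ * ‖x‖) := by
          exact mul_le_mul_of_nonneg_left (hCS i) (abs_nonneg _)
      _ ≤ |γ i| * ‖x‖ * Real.sqrt (‖v i‖ ^ 2 + ε) := by
          have hv : ‖v i‖ ≤ Real.sqrt (‖v i‖ ^ 2 + ε) := by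
            nlinarith [Real.sq_sqrt hsq.le, Real.sqrt_nonneg (‖v i‖ ^ 2 + ε),
              norm_nonneg (v i), hε]
          have h3 := mul_le_mul_of_nonneg_left hv
            (mul_nonneg (abs_nonneg (γ i)) (norm_nonneg x))
          nlinarith [h3]
  have := EuclideanSpace.norm_eq y
  rw [this]
  have : ∑ i, ‖y i‖ ^ 2 ≤ ∑ i, γ i ^ 2 * ‖x‖ ^ 2 := by
    apply Finset.sum_le_sum
    intro i _
    have := hbound i
    rw [Real.norm_eq_abs]
    nlinarith [abs_nonneg (y i), abs_nonneg (γ i), norm_nonneg x, sq_abs (γ i)]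
  calc Real.sqrt (∑ i, ‖y i‖ ^ 2) ≤ Real.sqrt (∑ i, γ i ^ 2 * ‖x‖ ^ 2) :=
        Real.sqrt_le_sqrt this
    _ = Real.sqrt (∑ i, γ i ^ 2) * ‖x‖ := by
        rw [← Finset.sum_mul, Real.sqrt_mul (by positivity), Real.sqrt_sq (norm_nonneg _)]


/-- WeightNorm: if the `i`-th row of `W` is `γ_i · v_i / √(‖v_i‖² + ε)`, then the
operator norm (largest singular value) of `W` with respect to Euclidean norms is at most
`√(∑ i, γ_i²)`, and consequently `x ↦ W x` is Lipschitz with that constant. -/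
theorem weightNorm_lipschitz (O D : ℕ) (hO : 1 ≤ O) (hD : 1 ≤ D)
    (ε : ℝ) (hε : 0 < ε)
    (γ : Fin O → ℝ) (v : Fin O → EuclideanSpace ℝ (Fin D))
    (W : Matrix (Fin O) (Fin D) ℝ)
    (hW : ∀ i j, W i j = γ i * v i j / Real.sqrt (‖v i‖ ^ 2 + ε)) :
    ‖LinearMap.toContinuousLinearMap (Matrix.toEuclideanLin W)‖ ≤
        Real.sqrt (∑ i, γ i ^ 2) ∧
      ∀ x₁ x₂ : EuclideanSpace ℝ (Fin D),
        ‖Matrix.toEuclideanLin W x₁ - Matrix.toEuclideanLin W x₂‖ ≤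
          Real.sqrt (∑ i, γ i ^ 2) * ‖x₁ - x₂‖ := by
  constructor
  · apply ContinuousLinearMap.opNorm_le_bound _ (Real.sqrt_nonneg _)
    intro x
    exact key O D ε hε γ v W hW x
  · intro x₁ x₂
    rw [← map_sub]
    exact key O D ε hε γ v W hW (x₁ - x₂)
end

section
/- Fix N ≥ 2 and D ≥ 1. Define the (single-head, identity-weight) dot-product self-attention map F : ℝ^{N×D} → ℝ^{N×D} whose i-th output row is F(X)_i = ∑_{j=1}^{N} P_{ij}·X_j, where P_{i·} = softmax over j of (⟨X_i, X_j⟩ / √D), X_j denotes the j-th row of X, and softmax(u)_j = exp(u_j)/∑_k exp(u_k). Then F is not Lipschitz continuous with respect to the Frobenius (Euclidean) norm on ℝ^{N×D}: there is no constant K ≥ 0 such that ‖F(X₁) − F(X₂)‖ ≤ K·‖X₁ − X₂‖ for all X₁, X₂. -/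
lemma aux_piLp2_apply_le {ι : Type*} [Fintype ι] {β : ι → Type*}
    [∀ i, SeminormedAddCommGroup (β i)] (x : PiLp 2 β) (i : ι) : ‖x i‖ ≤ ‖x‖ := by
  rw [PiLp.norm_eq_of_L2]
  rw [Real.le_sqrt (norm_nonneg _) (Finset.sum_nonneg fun _ _ => sq_nonneg _)]
  exact Finset.single_le_sum (f := fun j => ‖x j‖ ^ 2) (fun j _ => sq_nonneg _)
    (Finset.mem_univ i)

lemma aux_entry_le_norm {N D : ℕ} (Y : PiLp 2 fun _ : Fin N => EuclideanSpace ℝ (Fin D))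
    (i : Fin N) (d : Fin D) : |Y i d| ≤ ‖Y‖ := by
  calc |Y i d| = ‖Y i d‖ := (Real.norm_eq_abs _).symm
    _ ≤ ‖Y i‖ := aux_piLp2_apply_le (Y i) d
    _ ≤ ‖Y‖ := aux_piLp2_apply_le Y i

def attnV (D : ℕ) (e0 : Fin D) (c : ℝ) : EuclideanSpace ℝ (Fin D) :=
  WithLp.toLp 2 (fun d => if d = e0 then c else 0)

@[simp] lemma attnV_apply (D : ℕ) (e0 d : Fin D) (c : ℝ) :
    attnV D e0 c d = if d = e0 then c else 0 := rfl

def attnX (N D : ℕ) (i0 i1 : Fin N) (e0 : Fin D) (a c : ℝ) :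
    PiLp 2 fun _ : Fin N => EuclideanSpace ℝ (Fin D) :=
  WithLp.toLp 2 (fun i => if i = i0 then attnV D e0 c else if i = i1 then attnV D e0 a else 0)

@[simp] lemma attnX_apply (N D : ℕ) (i0 i1 : Fin N) (e0 : Fin D) (a c : ℝ) (i : Fin N) :
    attnX N D i0 i1 e0 a c i
      = if i = i0 then attnV D e0 c else if i = i1 then attnV D e0 a else 0 := rfl

set_option maxHeartbeats 1000000 in
/-- Single-head, identity-weight dot-product self-attention on `N ≥ 2` tokens in `ℝ^D`,
`F(X)_i = ∑_j softmax_j (⟨X_i, X_j⟩ / √D) • X_j`, is not Lipschitz continuous with respect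
to the Frobenius (Euclidean) norm on `ℝ^{N×D}`. -/
theorem dot_product_attention_not_lipschitz (N D : ℕ) (hN : 2 ≤ N) (hD : 1 ≤ D)
    (F : (PiLp 2 fun _ : Fin N => EuclideanSpace ℝ (Fin D)) →
      PiLp 2 fun _ : Fin N => EuclideanSpace ℝ (Fin D))
    (hF : ∀ X i d, F X i d =
      ∑ j, (Real.exp ((∑ t, X i t * X j t) / Real.sqrt D) /
            ∑ k, Real.exp ((∑ t, X i t * X k t) / Real.sqrt D)) * X j d) :
    ¬ ∃ K : ℝ, 0 ≤ K ∧ ∀ X₁ X₂, ‖F X₁ - F X₂‖ ≤ K * ‖X₁ - X₂‖ := by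
  rintro ⟨K, hK, hLip⟩
  obtain ⟨s, hs⟩ : ∃ s : ℝ, Real.sqrt D = s := ⟨_, rfl⟩
  simp only [hs] at hF
  have hs1 : (1 : ℝ) ≤ s := by
    rw [← hs, show (1:ℝ) = Real.sqrt 1 by simp]
    exact Real.sqrt_le_sqrt (by exact_mod_cast hD)
  have hs0 : (0 : ℝ) < s := lt_of_lt_of_le one_pos hs1
  have hN2 : (2 : ℝ) ≤ (N : ℝ) := by exact_mod_cast hN
  obtain ⟨E, hE⟩ : ∃ E : ℝ, Real.exp 1 = E := ⟨_, rfl⟩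
  have he2 : (2 : ℝ) < E := by
    rw [← hE]; nlinarith [Real.exp_one_gt_d9]
  obtain ⟨c₀, hc0def⟩ : ∃ c₀ : ℝ, ((N:ℝ)*(E - 1) - E)/((N:ℝ)*((N:ℝ)+E)) = c₀ := ⟨_, rfl⟩
  have hNE : (0:ℝ) < (N:ℝ)*((N:ℝ)+E) := by nlinarith
  have hc0 : 0 < c₀ := by
    rw [← hc0def]; apply div_pos _ hNE; nlinarith
  obtain ⟨a, ha0, ha2s, haK⟩ : ∃ a : ℝ, 0 < a ∧ 2*s ≤ a^2 ∧ K*s/c₀ < a^2 := by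
    refine ⟨Real.sqrt (2*s) + Real.sqrt (K*s/c₀) + 1, ?_, ?_, ?_⟩
    · have := Real.sqrt_nonneg (2*s); have := Real.sqrt_nonneg (K*s/c₀); linarith
    · nlinarith [Real.sq_sqrt (show (0:ℝ) ≤ 2*s by linarith), Real.sqrt_nonneg (2*s),
        Real.sqrt_nonneg (K*s/c₀)]
    · nlinarith [Real.sq_sqrt (show (0:ℝ) ≤ K*s/c₀ by positivity), Real.sqrt_nonneg (2*s),
        Real.sqrt_nonneg (K*s/c₀)]
  obtain ⟨ε, hε⟩ : ∃ ε : ℝ, s / a = ε := ⟨_, rfl⟩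
  have hε0 : 0 < ε := hε ▸ div_pos hs0 ha0
  -- indices
  set i0 : Fin N := ⟨0, by omega⟩ with hi0
  set i1 : Fin N := ⟨1, by omega⟩ with hi1
  have hii : i0 ≠ i1 := by simp [hi0, hi1, Fin.ext_iff]
  set e0 : Fin D := ⟨0, by omega⟩ with he0
  set X : ℝ → (PiLp 2 fun _ : Fin N => EuclideanSpace ℝ (Fin D)) :=
    fun c => attnX N D i0 i1 e0 a c with hX
  have hvv : ∀ c c' : ℝ, ∑ t, attnV D e0 c t * attnV D e0 c' t = c * c' := by
    intro c c'
    have h1 : ∀ t, attnV D e0 c t * attnV D e0 c' t = if t = e0 then c * c' else 0 := by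
      intro t; by_cases h : t = e0 <;> simp [h]
    rw [Finset.sum_congr rfl fun t _ => h1 t]
    simp
  have hXval : ∀ (c : ℝ) (j : Fin N),
      X c j e0 = if j = i0 then c else if j = i1 then a else 0 := by
    intro c j
    by_cases h0 : j = i0
    · subst h0; simp [hX]
    · by_cases h1 : j = i1
      · subst h1; simp [hX, h0]
      · simp [hX, h0, h1]
  have hinner : ∀ (c : ℝ) (j : Fin N),
      (∑ t, X c i0 t * X c j t) = if j = i0 then c*c else if j = i1 then c*a else 0 := by
    intro c j
    by_cases h0 : j = i0
    · subst h0; simp [hX, hvv]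
    · by_cases h1 : j = i1
      · subst h1; simp [hX, h0, hii, hvv, Ne.symm hii]
      · simp [hX, h0, h1]
  have hZ : ∀ c : ℝ, (∑ k, Real.exp ((∑ t, X c i0 t * X c k t) / s))
      = Real.exp (c*c/s) + Real.exp (c*a/s) + ((N:ℝ) - 2) := by
    intro c
    have h1 : ∀ k : Fin N, Real.exp ((∑ t, X c i0 t * X c k t) / s) =
        (if k = i0 then Real.exp (c*c/s) - 1 else 0) +
        ((if k = i1 then Real.exp (c*a/s) - 1 else 0) + 1) := by
      intro k
      rw [hinner c k]
      by_cases h0 : k = i0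
      · subst h0
        rw [if_pos rfl, if_pos rfl, if_neg hii]
        ring
      · by_cases h1 : k = i1
        · subst h1
          rw [if_neg h0, if_neg h0, if_pos rfl, if_pos rfl]
          ring
        · rw [if_neg h0, if_neg h0, if_neg h1, if_neg h1]
          simp
    rw [Finset.sum_congr rfl fun k _ => h1 k]
    rw [Finset.sum_add_distrib, Finset.sum_add_distrib]
    simp [Finset.card_univ]
    ring
  have hFval : ∀ c : ℝ, F (X c) i0 e0 =
      (Real.exp (c*c/s) * c + Real.exp (c*a/s) * a) /
        (Real.exp (c*c/s) + Real.exp (c*a/s) + ((N:ℝ) - 2)) := by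
    intro c
    rw [hF]
    have hterm : ∀ j : Fin N,
        (Real.exp ((∑ t, X c i0 t * X c j t) / s) /
          ∑ k, Real.exp ((∑ t, X c i0 t * X c k t) / s)) * X c j e0 =
        (if j = i0 then Real.exp (c*c/s) * c /
            (Real.exp (c*c/s) + Real.exp (c*a/s) + ((N:ℝ) - 2)) else 0) +
        (if j = i1 then Real.exp (c*a/s) * a /
            (Real.exp (c*c/s) + Real.exp (c*a/s) + ((N:ℝ) - 2)) else 0) := by
      intro j
      rw [hZ c, hinner c j, hXval c j]
      by_cases h0 : j = i0
      · subst h0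
        rw [if_pos rfl, if_pos rfl, if_pos rfl, if_neg hii]
        ring
      · by_cases h1 : j = i1
        · subst h1
          rw [if_neg h0, if_neg h0, if_neg h0, if_pos rfl, if_pos rfl, if_pos rfl]
          ring
        · rw [if_neg h0, if_neg h0, if_neg h0, if_neg h1, if_neg h1, if_neg h1]
          simp
    rw [Finset.sum_congr rfl fun j _ => hterm j, Finset.sum_add_distrib]
    simp
    ring
  have hF0 : F (X 0) i0 e0 = a / (N:ℝ) := by
    rw [hFval 0]
    rw [show (0:ℝ)*0 = 0 by ring, show (0:ℝ)*a = 0 by ring, zero_div, Real.exp_zero]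
    rw [show (1:ℝ)*0 + 1*a = a by ring, show (1:ℝ)+1+((N:ℝ)-2) = (N:ℝ) by ring]
  have hεa : ε * a / s = 1 := by
    rw [← hε]; field_simp
  have hεε : ε*ε/s ≤ 1/2 := by
    have h1 : ε*ε/s = s/(a^2) := by
      rw [← hε]; field_simp
    rw [h1, div_le_iff₀ (by positivity)]
    linarith
  have hexphalf : Real.exp (ε*ε/s) ≤ 2 := by
    have h1 := Real.exp_le_exp.mpr hεε
    have hsq : Real.exp (1/2) * Real.exp (1/2) = Real.exp 1 := by
      rw [← Real.exp_add]; norm_num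
    have h2 : Real.exp ((1:ℝ)/2) < 2 := by
      nlinarith [Real.exp_one_lt_d9, Real.exp_pos ((1:ℝ)/2)]
    linarith
  have hFε : E * a / ((N:ℝ) + E) ≤ F (X ε) i0 e0 := by
    rw [hFval ε, hεa, hE]
    have hE0 : 0 < E := by linarith
    have hnum : E * a ≤ Real.exp (ε*ε/s) * ε + E * a := by
      nlinarith [Real.exp_pos (ε*ε/s)]
    have hden : Real.exp (ε*ε/s) + E + ((N:ℝ) - 2) ≤ (N:ℝ) + E := by linarith
    have hdenpos : (0:ℝ) < Real.exp (ε*ε/s) + E + ((N:ℝ) - 2) := by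
      have := Real.exp_pos (ε*ε/s); linarith
    have hnum0 : (0:ℝ) ≤ Real.exp (ε*ε/s) * ε + E * a := by
      nlinarith [Real.exp_pos (ε*ε/s)]
    exact div_le_div₀ hnum0 hnum hdenpos hden
  have key : E * a/((N:ℝ)+E) - a/(N:ℝ) = a * c₀ := by
    rw [← hc0def]
    have hN0 : (N:ℝ) ≠ 0 := by linarith
    have hNE0 : (N:ℝ) + E ≠ 0 := by nlinarith
    field_simp
    ring
  have hdiff : a * c₀ ≤ ‖F (X ε) - F (X 0)‖ := by
    have h1 : (F (X ε) - F (X 0)) i0 e0 = F (X ε) i0 e0 - F (X 0) i0 e0 := rfl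
    have h2 := aux_entry_le_norm (F (X ε) - F (X 0)) i0 e0
    have h3 : a * c₀ ≤ F (X ε) i0 e0 - F (X 0) i0 e0 := by
      rw [hF0]; linarith [hFε, key.le, key.ge]
    calc a * c₀ ≤ F (X ε) i0 e0 - F (X 0) i0 e0 := h3
      _ = (F (X ε) - F (X 0)) i0 e0 := h1.symm
      _ ≤ |(F (X ε) - F (X 0)) i0 e0| := le_abs_self _
      _ ≤ ‖F (X ε) - F (X 0)‖ := h2
  have hv0 : attnV D e0 (0:ℝ) = 0 := by
    ext d; by_cases hd : d = e0 <;> simp [hd]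
  have hvε : ‖attnV D e0 ε‖ = ε := by
    rw [EuclideanSpace.norm_eq]
    have h1 : ∀ d : Fin D, ‖attnV D e0 ε d‖^2 = if d = e0 then ε^2 else 0 := by
      intro d; by_cases hd : d = e0 <;> simp [hd, sq_abs]
    rw [Finset.sum_congr rfl fun d _ => h1 d]
    simp [Real.sqrt_sq hε0.le]
  have hXnorm : ‖X ε - X 0‖ = ε := by
    have hY : ∀ i : Fin N, (X ε - X 0) i = if i = i0 then attnV D e0 ε else 0 := by
      intro i
      have h0 : (X ε - X 0) i = X ε i - X 0 i := rfl
      rw [h0]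
      by_cases h : i = i0
      · subst h; simp [hX, hv0]
      · rw [if_neg h]
        simp [hX, h]
    rw [PiLp.norm_eq_of_L2]
    have h1 : ∑ i : Fin N, ‖(X ε - X 0) i‖^2 = ε^2 := by
      rw [Finset.sum_congr rfl fun i _ => by rw [hY i]]
      rw [Finset.sum_congr rfl fun i _ => apply_ite (fun y => ‖y‖^2) (i = i0) _ _]
      simp [hvε]
    rw [h1, Real.sqrt_sq hε0.le]
  have hfin := hLip (X ε) (X 0)
  rw [hXnorm] at hfin
  have h4 : a * c₀ ≤ K * ε := le_trans hdiff hfin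
  have h5 : a * c₀ * a ≤ K * s := by
    have h6 := mul_le_mul_of_nonneg_right h4 ha0.le
    have h7 : K * ε * a = K * s := by
      rw [← hε]; field_simp
    linarith
  have h8 : K * s < a^2 * c₀ := by
    rw [div_lt_iff₀ hc0] at haK; exact haK
  nlinarith
end
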